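/- arXiv:2309.04703 — 2 statements merged into one kernel-verified Lean document; each statement's English description precedes it below -/
import Mathlib

section
/- With rewards R_n* as above and 0 ≤ b_1 ≤ ... ≤ b_N, 0 < θ_1 ≤ ... ≤ θ_N, the local upward IC constraints hold: R_n* − b_n²/θ_n ≥ R_{n+1}* − b_{n+1}²/θ_n for all 1 ≤ n ≤ N−1. -/
theorem optimal_reward_LUIC (N : ℕ) (θ b : ℕ → ℝ)
    (hθpos : ∀ n, 1 ≤ n → n ≤ N → 0 < θ n)
    (hθmono : ∀ i, 1 ≤ i → i < N → θ i ≤ θ (i + 1))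
    (hb1 : 0 ≤ b 1)
    (hbmono : ∀ i, 1 ≤ i → i < N → b i ≤ b (i + 1))
    (R : ℕ → ℝ)
    (hR : ∀ n, 1 ≤ n → n ≤ N →
      R n = b 1 ^ 2 / θ 1 + ∑ i ∈ Finset.Icc 2 n, (b i ^ 2 - b (i - 1) ^ 2) / θ i) :
    ∀ n, 1 ≤ n → n ≤ N - 1 →
      R n - b n ^ 2 / θ n ≥ R (n + 1) - b (n + 1) ^ 2 / θ n := by
  have hbnn : ∀ k, 1 ≤ k → k ≤ N → 0 ≤ b k := by
    intro k
    induction k with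
    | zero => omega
    | succ m ih =>
      intro h1 h2
      rcases Nat.eq_or_lt_of_le h1 with h | h
      · simpa [← h] using hb1
      · have hm1 : 1 ≤ m := by omega
        have := hbmono m hm1 (by omega)
        exact le_trans (ih hm1 (by omega)) this
  intro n h1 hn
  have hN : n + 1 ≤ N := by omega
  have hRn := hR n h1 (by omega)
  have hRn1 := hR (n + 1) (by omega) hN
  rw [Finset.sum_Icc_succ_top (by omega : 2 ≤ n + 1)] at hRn1
  simp only [Nat.add_sub_cancel] at hRn1
  have hbn : 0 ≤ b n := hbnn n h1 (by omega)
  have hbb : b n ≤ b (n + 1) := hbmono n h1 (by omega)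
  have hΔ : 0 ≤ b (n + 1) ^ 2 - b n ^ 2 := by nlinarith
  have hθn : 0 < θ n := hθpos n h1 (by omega)
  have hθle : θ n ≤ θ (n + 1) := hθmono n h1 (by omega)
  have hkey : (b (n + 1) ^ 2 - b n ^ 2) / θ (n + 1) ≤ (b (n + 1) ^ 2 - b n ^ 2) / θ n := by
    gcongr
  have hsplit : (b (n + 1) ^ 2 - b n ^ 2) / θ n = b (n + 1) ^ 2 / θ n - b n ^ 2 / θ n := by
    ring
  linarith [hkey, hsplit.le, hsplit.ge]
end

section
/- For any IR- and IC-feasible contract {(b_n, R_n)} with given bandwidths b_1 ≤ ... ≤ b_N, the rewards R_n* = b_1²/θ_1 + Σ_{i=2}^{n}(b_i² − b_{i−1}²)/θ_i are minimal: R_n ≥ R_n* for every n. Consequently, R_n* maximizes the MSP's utility U_s = Σ_n M·Q_n·(S_n − R_n) over feasible rewards for fixed bandwidths. -/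
theorem optimal_reward_minimal (N : ℕ) (θ b R Rstar Q S : ℕ → ℝ) (M : ℝ)
    (hM : 0 < M) (hQ : ∀ n, 1 ≤ n → n ≤ N → 0 ≤ Q n)
    (hθpos : ∀ n, 1 ≤ n → n ≤ N → 0 < θ n)
    (hθmono : ∀ i, 1 ≤ i → i < N → θ i ≤ θ (i + 1))
    (hbmono : ∀ i, 1 ≤ i → i < N → b i ≤ b (i + 1))
    (hb1 : 0 ≤ b 1)
    (hIR : ∀ n, 1 ≤ n → n ≤ N → R n - b n ^ 2 / θ n ≥ 0)
    (hIC : ∀ n j, 1 ≤ n → n ≤ N → 1 ≤ j → j ≤ N →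
      R n - b n ^ 2 / θ n ≥ R j - b j ^ 2 / θ n)
    (hRstar : ∀ n, 1 ≤ n → n ≤ N →
      Rstar n = b 1 ^ 2 / θ 1 + ∑ i ∈ Finset.Icc 2 n, (b i ^ 2 - b (i - 1) ^ 2) / θ i) :
    (∀ n, 1 ≤ n → n ≤ N → R n ≥ Rstar n) ∧
    (∑ n ∈ Finset.Icc 1 N, M * Q n * (S n - Rstar n) ≥
      ∑ n ∈ Finset.Icc 1 N, M * Q n * (S n - R n)) := by
  have hmain : ∀ n, 1 ≤ n → n ≤ N → R n ≥ Rstar n := by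
    intro n h1
    induction n, h1 using Nat.le_induction with
    | base =>
      intro h1
      rw [hRstar 1 le_rfl h1]
      have : Finset.Icc 2 1 = ∅ := by decide
      rw [this, Finset.sum_empty, add_zero]
      have := hIR 1 le_rfl h1
      linarith
    | succ n hn ih =>
      intro hle
      have hnN : n ≤ N := le_of_lt (Nat.lt_of_succ_le hle)
      have hIH := ih hnN
      have hic := hIC (n + 1) n (by omega) hle hn hnN
      have hRs := hRstar (n + 1) (by omega) hle
      have hRsn := hRstar n hn hnN
      rw [Finset.sum_Icc_succ_top (by omega : 2 ≤ n + 1)] at hRs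
      have hsimp : (n + 1) - 1 = n := by omega
      rw [hsimp] at hRs
      have : Rstar (n + 1) = Rstar n + (b (n + 1) ^ 2 - b n ^ 2) / θ (n + 1) := by
        rw [hRs, hRsn]; ring
      rw [this]
      have : R (n + 1) ≥ R n + (b (n + 1) ^ 2 - b n ^ 2) / θ (n + 1) := by
        have : (b (n + 1) ^ 2 - b n ^ 2) / θ (n + 1)
            = b (n + 1) ^ 2 / θ (n + 1) - b n ^ 2 / θ (n + 1) := by
          ring
        rw [this]; linarith
      linarith
  refine ⟨hmain, ?_⟩
  apply Finset.sum_le_sum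
  intro i hi
  rw [Finset.mem_Icc] at hi
  have h1 := hmain i hi.1 hi.2
  have h2 := hQ i hi.1 hi.2
  have : 0 ≤ M * Q i := mul_nonneg hM.le h2
  nlinarith
end
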